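/- Let α be an algebraic integer belonging to some cyclotomic field ℚ(ζ), where ζ is a root of unity. Then the following are equivalent: (1) α is a root of unity; (2) |α| = 1; (3) 𝔪(α) = 1, where 𝔪(α) = (1/|Gal(ℚ(ζ)/ℚ)|) · Σ_{σ ∈ Gal(ℚ(ζ)/ℚ)} |σ(α)|². -/

import Mathlib

open scoped Classical

noncomputable section

/-- `z` is a (complex) root of unity. -/
def IsRootOfUnity (z : ℂ) : Prop := ∃ n : ℕ, 0 < n ∧ z ^ n = 1

/-- `χ` is an irreducible complex character of the group `G`, i.e. the character of some
simple (irreducible) finite-dimensional complex representation of `G`. -/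
def IsIrredChar {G : Type} [Group G] (χ : G → ℂ) : Prop :=
  ∃ V : FDRep ℂ G, CategoryTheory.Simple V ∧ χ = V.character

set_option maxHeartbeats 1000000
set_option synthInstance.maxHeartbeats 400000

/-- Let `ζ` be a root of unity, `K = ℚ(ζ)` the cyclotomic field it generates inside `ℂ`,
and let `α ∈ K` be an algebraic integer.  Then the following are equivalent:
(1) `α` is a root of unity; (2) `|α| = 1`; (3) `𝔪(α) = 1`, where `𝔪(α)` is the average
of `|σ α|²` over the Galois group `Gal(K/ℚ)`. -/
theorem rootOfUnity_tfae (ζ : ℂ) (hζ : IsRootOfUnity ζ)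
    (K : IntermediateField ℚ ℂ) (hK : K = IntermediateField.adjoin ℚ {ζ})
    (α : K) (hα : IsIntegral ℤ α) :
    List.TFAE
      [IsRootOfUnity (α : ℂ),
       ‖(α : ℂ)‖ = 1,
       (Nat.card (K ≃ₐ[ℚ] K) : ℝ)⁻¹ *
           ∑ᶠ σ : K ≃ₐ[ℚ] K, ‖((σ α : K) : ℂ)‖ ^ 2 = 1] := by
  obtain ⟨n0, hn0, hζpow⟩ := hζ
  have hfin : IsOfFinOrder ζ := isOfFinOrder_iff_pow_eq_one.2 ⟨n0, hn0, hζpow⟩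
  have hζint : IsIntegral ℚ ζ := by
    refine ⟨Polynomial.X ^ n0 - Polynomial.C 1, Polynomial.monic_X_pow_sub_C 1 hn0.ne', ?_⟩
    simp [hζpow]
  set m : ℕ+ := ⟨orderOf ζ, hfin.orderOf_pos⟩ with hm
  have hprim : IsPrimitiveRoot ζ (m : ℕ) := IsPrimitiveRoot.orderOf ζ
  haveI hcyc : IsCyclotomicExtension {(m : ℕ)} ℚ K := by
    rw [hK]
    refine IsCyclotomicExtension.equiv _ _ _ (h := ?_)
      (.refl : (IntermediateField.adjoin ℚ {ζ}).toSubalgebra ≃ₐ[ℚ] _)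
    rw [IntermediateField.adjoin_simple_toSubalgebra_of_isAlgebraic hζint.isAlgebraic]
    exact hprim.adjoin_isCyclotomicExtension ℚ
  haveI : NumberField K := IsCyclotomicExtension.numberField {(m : ℕ)} ℚ K
  haveI : IsGalois ℚ K := IsCyclotomicExtension.isGalois {(m : ℕ)} ℚ K
  have hcomm : ∀ σ τ : K ≃ₐ[ℚ] K, σ * τ = τ * σ :=
    isMulCommutative_iff.1 (IsCyclotomicExtension.isMulCommutative {(m : ℕ)} ℚ K)
  let j : ℂ ≃ₐ[ℚ] ℂ := Complex.conjAe.restrictScalars ℚ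
  let c : K ≃ₐ[ℚ] K := j.restrictNormal K
  have hc : ∀ x : K, ((c x : K) : ℂ) = starRingEnd ℂ (x : ℂ) := fun x => by
    have := AlgEquiv.restrictNormal_commutes j K x
    exact this
  have hNpos : 0 < Fintype.card (K ≃ₐ[ℚ] K) := Fintype.card_pos
  have hN : (Nat.card (K ≃ₐ[ℚ] K) : ℝ) = (Fintype.card (K ≃ₐ[ℚ] K) : ℝ) := by
    rw [Nat.card_eq_fintype_card]
  have habs1 : ∀ a : ℝ, 0 ≤ a → ∀ k : ℕ, k ≠ 0 → a ^ k = 1 → a = 1 := by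
    intro a ha k hk h
    by_contra hne
    rcases lt_or_gt_of_ne hne with hlt | hgt
    · have := pow_lt_one₀ ha hlt hk
      linarith
    · have := one_lt_pow₀ hgt hk
      linarith
  tfae_have 1 → 3
  | ⟨k, hk, hαk⟩ => by
    have hαk' : α ^ k = 1 := by exact_mod_cast hαk
    rw [finsum_eq_sum_of_fintype, hN]
    have : ∀ σ : K ≃ₐ[ℚ] K, ‖((σ α : K) : ℂ)‖ ^ 2 = 1 := by
      intro σ
      have h1 : ((σ α : K) : ℂ) ^ k = 1 := by
        have h2 : σ α ^ k = 1 := by rw [← map_pow, hαk', map_one]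
        exact_mod_cast congrArg (fun x : K => (x : ℂ)) h2
      have h3 : ‖((σ α : K) : ℂ)‖ ^ k = 1 := by
        rw [← norm_pow, h1, norm_one]
      rw [habs1 _ (norm_nonneg _) k hk.ne' h3, one_pow]
    rw [Finset.sum_congr rfl fun σ _ => this σ]
    simp [Finset.card_univ, hNpos.ne']
  tfae_have 3 → 2
  | h3 => by
    rw [finsum_eq_sum_of_fintype, hN] at h3
    have hα0 : α ≠ 0 := by
      rintro rfl
      have hz : ∀ σ : K ≃ₐ[ℚ] K, ‖((σ 0 : K) : ℂ)‖ ^ 2 = 0 := fun σ => by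
        rw [map_zero]
        simp
      rw [Finset.sum_congr rfl fun σ _ => hz σ] at h3
      simp at h3
    set f : (K ≃ₐ[ℚ] K) → ℝ := fun σ => ‖((σ α : K) : ℂ)‖ ^ 2 with hf
    have hfpos : ∀ σ, 0 < f σ := by
      intro σ
      have h1 : σ α ≠ 0 := fun h => hα0 (by simpa using congrArg σ.symm h)
      have h2 : ((σ α : K) : ℂ) ≠ 0 := by exact_mod_cast h1
      simp only [hf]
      exact pow_pos (norm_pos_iff.mpr h2) 2
    have hNe : ((Fintype.card (K ≃ₐ[ℚ] K) : ℝ)) ≠ 0 := Nat.cast_ne_zero.2 hNpos.ne'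
    have hsum : ∑ σ, f σ = (Fintype.card (K ≃ₐ[ℚ] K) : ℝ) := by
      field_simp at h3
      linarith [h3]
    obtain ⟨z, hz⟩ : ∃ z : ℤ, (z : ℚ) = Algebra.norm ℚ α :=
      IsIntegrallyClosed.isIntegral_iff.1 (Algebra.isIntegral_norm ℚ hα)
    have hnrm0 : Algebra.norm ℚ α ≠ 0 := by
      rw [Algebra.norm_ne_zero_iff]
      exact hα0
    have hz0 : z ≠ 0 := by
      rintro rfl
      simp at hz
      exact hnrm0 hz.symm
    have hprodeq : (∏ σ : K ≃ₐ[ℚ] K, ((σ α : K) : ℂ)) = (z : ℂ) := by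
      have h1 := Algebra.norm_eq_prod_automorphisms (K := ℚ) α
      have h2 := congrArg (algebraMap K ℂ) h1
      rw [map_prod] at h2
      have h2' : ((algebraMap K ℂ) ((algebraMap ℚ K) (Algebra.norm ℚ α)))
          = ∏ σ : K ≃ₐ[ℚ] K, ((σ α : K) : ℂ) := h2
      rw [← h2', ← IsScalarTower.algebraMap_apply, eq_ratCast, ← hz]
      push_cast
      rfl
    have hP1 : (1:ℝ) ≤ ∏ σ, f σ := by
      have h1 : ∏ σ, f σ = ‖∏ σ : K ≃ₐ[ℚ] K, ((σ α : K) : ℂ)‖ ^ 2 := by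
        rw [norm_prod]
        rw [Finset.prod_pow]
      rw [h1, hprodeq, Complex.norm_intCast]
      have : (1:ℝ) ≤ |(z:ℝ)| := by
        rw [← Int.cast_abs]
        exact_mod_cast Int.one_le_abs hz0
      nlinarith
    have hlogsum : ∑ σ, Real.log (f σ) = Real.log (∏ σ, f σ) :=
      (Real.log_prod fun σ _ => (hfpos σ).ne').symm
    have hsum0 : ∑ σ : K ≃ₐ[ℚ] K, (f σ - 1 - Real.log (f σ)) = - Real.log (∏ σ, f σ) := by
      rw [Finset.sum_sub_distrib, Finset.sum_sub_distrib, hsum, hlogsum]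
      simp [Finset.card_univ]
    have hterm0 : ∀ σ : K ≃ₐ[ℚ] K, f σ - 1 - Real.log (f σ) = 0 := by
      have hnn : ∀ σ ∈ Finset.univ, 0 ≤ f σ - 1 - Real.log (f σ) := fun σ _ => by
        have := Real.log_le_sub_one_of_pos (hfpos σ)
        linarith
      have hle : ∑ σ : K ≃ₐ[ℚ] K, (f σ - 1 - Real.log (f σ)) ≤ 0 := by
        rw [hsum0]
        simpa using Real.log_nonneg hP1
      have heq : ∑ σ : K ≃ₐ[ℚ] K, (f σ - 1 - Real.log (f σ)) = 0 :=
        le_antisymm hle (Finset.sum_nonneg hnn)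
      intro σ
      exact (Finset.sum_eq_zero_iff_of_nonneg hnn).1 heq σ (Finset.mem_univ σ)
    have hf1 : ∀ σ : K ≃ₐ[ℚ] K, f σ = 1 := by
      intro σ
      by_contra h
      have := Real.log_lt_sub_one_of_pos (hfpos σ) h
      have := hterm0 σ
      linarith
    have h1 := hf1 AlgEquiv.refl
    simp only [hf, AlgEquiv.coe_refl, id_eq] at h1
    exact habs1 _ (norm_nonneg _) 2 two_ne_zero h1
  tfae_have 2 → 1
  | h2 => by
    have hβ : α * c α = 1 := by
      have h1 : ((α * c α : K) : ℂ) = 1 := by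
        push_cast
        rw [hc α, Complex.mul_conj, Complex.normSq_eq_norm_sq, h2]
        norm_num
      exact_mod_cast h1
    have hφ : ∀ φ : K →+* ℂ, ‖φ α‖ = 1 := by
      intro φ
      let σ : K ≃ₐ[ℚ] K := φ.toRatAlgHom.restrictNormal' K
      have hσ : ∀ x : K, ((σ x : K) : ℂ) = φ x := fun x => by
        have h := AlgHom.restrictNormal_commutes φ.toRatAlgHom K x
        rw [Algebra.algebraMap_self, RingHom.id_apply] at h
        exact h
      have key : (φ α) * (starRingEnd ℂ) (φ α) = 1 := by
        have hcs : c (σ α) = σ (c α) := by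
          have h := congrArg (fun g : K ≃ₐ[ℚ] K => g α) (hcomm c σ)
          simpa [AlgEquiv.mul_apply] using h
        calc (φ α) * (starRingEnd ℂ) (φ α)
            = ((σ α : K) : ℂ) * ((c (σ α) : K) : ℂ) := by rw [hc (σ α), hσ α]
          _ = ((σ α * σ (c α) : K) : ℂ) := by rw [hcs]; push_cast; ring
          _ = ((σ (α * c α) : K) : ℂ) := by rw [← map_mul]
          _ = 1 := by rw [hβ, map_one]; norm_cast
      have hns : Complex.normSq (φ α) = 1 := by
        rw [Complex.mul_conj] at key
        exact_mod_cast key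
      rw [Complex.norm_def, hns, Real.sqrt_one]
    obtain ⟨k, hk, hk1⟩ := NumberField.Embeddings.pow_eq_one_of_norm_eq_one K ℂ hα hφ
    exact ⟨k, hk, by exact_mod_cast congrArg (fun x : K => (x : ℂ)) hk1⟩
  tfae_finish
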